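/- arXiv:1301.2911 — 2 statements merged into one kernel-verified Lean document; each statement's English description precedes it below -/
import Mathlib

section
/- Let V be a reflexive Banach space with dual V*, and let A^n, A : V → 2^{V*} be maximal monotone operators. Suppose A^n converges to A in the sense of graphs (i.e. for every [v,v*] in Gr A there exists a sequence [v_n, v_n*] in Gr A^n converging strongly to [v,v*] in V × V*). If [v_n, v_n*] ∈ Gr A^n, v_n ⇀ v_0 weakly in V, v_n* ⇀ v_0* weakly in V*, and limsup_{n→∞} ⟨v_n*, v_n⟩ ≤ ⟨v_0*, v_0⟩, then [v_0, v_0*] ∈ Gr A and lim_{n→∞} ⟨v_n*, v_n⟩ = ⟨v_0*, v_0⟩. -/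
open Filter Topology NormedSpace

variable {V : Type*} [NormedAddCommGroup V] [NormedSpace ℝ V]

/-- A multivalued operator `A : V → 2^{V*}` is monotone. -/
def MonotoneOp (A : V → Set (StrongDual ℝ V)) : Prop :=
  ∀ ⦃v u : V⦄ ⦃v' u' : StrongDual ℝ V⦄, v' ∈ A v → u' ∈ A u → 0 ≤ (v' - u') (v - u)

/-- A multivalued operator `A : V → 2^{V*}` is maximal monotone. -/
def MaxMonotoneOp (A : V → Set (StrongDual ℝ V)) : Prop :=
  MonotoneOp A ∧ ∀ (v : V) (v' : StrongDual ℝ V),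
    (∀ (u : V) (u' : StrongDual ℝ V), u' ∈ A u → 0 ≤ (v' - u') (v - u)) → v' ∈ A v

/-- Graph convergence `Aⁿ ⇥ A` of multivalued operators: every element of the graph of `A`
is the strong limit of a sequence of elements of the graphs of the `Aⁿ`. -/
def GraphConv (An : ℕ → V → Set (StrongDual ℝ V)) (A : V → Set (StrongDual ℝ V)) : Prop :=
  ∀ (v : V) (v' : StrongDual ℝ V), v' ∈ A v →
    ∃ (w : ℕ → V) (w' : ℕ → StrongDual ℝ V),
      (∀ n, w' n ∈ An n (w n)) ∧
      Tendsto w atTop (𝓝 v) ∧ Tendsto w' atTop (𝓝 v')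

/-- Weak convergence in `V`. -/
def WeakTendsto (v : ℕ → V) (v₀ : V) : Prop :=
  ∀ f : StrongDual ℝ V, Tendsto (fun n => f (v n)) atTop (𝓝 (f v₀))

/-- Weak convergence in `V*` (for reflexive `V` this coincides with the weak topology,
being the weak-* topology). -/
def WeakTendstoDual (f : ℕ → StrongDual ℝ V) (f₀ : StrongDual ℝ V) : Prop :=
  ∀ x : V, Tendsto (fun n => f n x) atTop (𝓝 (f₀ x))

/-- If `fₙ → f₀` at the single point `x₀`, the norms `‖fₙ‖` are uniformly bounded, and
`xₙ → x₀` strongly, then `fₙ xₙ → f₀ x₀`. -/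
lemma aux_weakstar_strong {f : ℕ → StrongDual ℝ V} {f₀ : StrongDual ℝ V} {x : ℕ → V} {x₀ : V}
    {C : ℝ} (hC : ∀ n, ‖f n‖ ≤ C)
    (hf : Tendsto (fun n => f n x₀) atTop (𝓝 (f₀ x₀)))
    (hx : Tendsto x atTop (𝓝 x₀)) :
    Tendsto (fun n => f n (x n)) atTop (𝓝 (f₀ x₀)) := by
  have h0 : Tendsto (fun n => f n (x n) - f₀ x₀) atTop (𝓝 0) := by
    refine squeeze_zero_norm (a := fun n => C * ‖x n - x₀‖ + ‖f n x₀ - f₀ x₀‖) (fun n => ?_) ?_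
    · 
      have he : f n (x n) - f₀ x₀ = f n (x n - x₀) + (f n x₀ - f₀ x₀) := by
        rw [map_sub]; ring
      rw [he]
      refine (norm_add_le _ _).trans (add_le_add_left ?_ _)
      exact ((f n).le_opNorm _).trans
        (mul_le_mul_of_nonneg_right (hC n) (norm_nonneg _))
    · have h1 : Tendsto (fun n => ‖x n - x₀‖) atTop (𝓝 0) :=
        by simpa using (tendsto_sub_nhds_zero_iff.mpr hx).norm
      have h2 : Tendsto (fun n => ‖f n x₀ - f₀ x₀‖) atTop (𝓝 0) :=
        by simpa using (tendsto_sub_nhds_zero_iff.mpr hf).norm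
      simpa using (h1.const_mul C).add h2
  simpa using h0.add_const (f₀ x₀)

/-- Let `V` be a reflexive Banach space and `Aⁿ, A` maximal monotone operators
from `V` to `2^{V*}` with `Aⁿ ⇥ A` (graph convergence).  If `[vₙ, vₙ*] ∈ Gr Aⁿ`,
`vₙ ⇀ v₀`, `vₙ* ⇀ v₀*` and `limsup ⟨vₙ*, vₙ⟩ ≤ ⟨v₀*, v₀⟩`, then `[v₀, v₀*] ∈ Gr A`
and `⟨vₙ*, vₙ⟩ → ⟨v₀*, v₀⟩`. -/
theorem graph_convergence_limit
    [CompleteSpace V]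
    (hrefl : Function.Surjective (NormedSpace.inclusionInDoubleDual ℝ V))
    (An : ℕ → V → Set (StrongDual ℝ V)) (A : V → Set (StrongDual ℝ V))
    (hAn : ∀ n, MaxMonotoneOp (An n)) (hA : MaxMonotoneOp A)
    (hconv : GraphConv An A)
    (v : ℕ → V) (v' : ℕ → StrongDual ℝ V) (v₀ : V) (v₀' : StrongDual ℝ V)
    (hmem : ∀ n, v' n ∈ An n (v n))
    (hweak : WeakTendsto v v₀) (hweak' : WeakTendstoDual v' v₀')
    (hlimsup : Filter.limsup (fun n => (v' n) (v n)) atTop ≤ v₀' v₀) :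
    v₀' ∈ A v₀ ∧ Tendsto (fun n => (v' n) (v n)) atTop (𝓝 (v₀' v₀)) := by
  set ι := NormedSpace.inclusionInDoubleDual ℝ V with hι
  -- uniform bound on ‖v' n‖ (Banach–Steinhaus)
  obtain ⟨C₁, hC₁⟩ : ∃ C, ∀ n, ‖v' n‖ ≤ C := by
    apply banach_steinhaus (g := v')
    intro x
    obtain ⟨C, hC⟩ := ((hweak' x).norm.bddAbove_range)
    exact ⟨C, fun n => hC ⟨n, rfl⟩⟩
  -- uniform bound on ‖ι (v n)‖ (Banach–Steinhaus in the dual)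
  obtain ⟨C₂, hC₂⟩ : ∃ C, ∀ n, ‖ι (v n)‖ ≤ C := by
    apply banach_steinhaus (g := fun n => ι (v n))
    intro f
    have : Tendsto (fun n => ι (v n) f) atTop (𝓝 (f v₀)) := by
      simpa [hι, NormedSpace.dual_def] using hweak f
    obtain ⟨C, hC⟩ := this.norm.bddAbove_range
    exact ⟨C, fun n => hC ⟨n, rfl⟩⟩
  set a : ℕ → ℝ := fun n => (v' n) (v n) with ha
  -- two-sided bound on |a n|
  have habs : ∀ n, |a n| ≤ C₂ * C₁ := by
    intro n
    have : a n = ι (v n) (v' n) := by simp [ha, hι, NormedSpace.dual_def]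
    rw [this, ← Real.norm_eq_abs]
    exact ((ι (v n)).le_opNorm _).trans
      (mul_le_mul (hC₂ n) (hC₁ n) (norm_nonneg _)
        ((norm_nonneg (ι (v n))).trans (hC₂ n)))
  have hbddle : IsBoundedUnder (· ≤ ·) atTop a :=
    isBoundedUnder_of ⟨C₂ * C₁, fun n => (le_abs_self _).trans (habs n)⟩
  have hbddge : IsBoundedUnder (· ≥ ·) atTop a :=
    isBoundedUnder_of ⟨-(C₂ * C₁), fun n => neg_le_of_abs_le (habs n)⟩
  -- key liminf estimate
  have key : ∀ (u : V) (u' : StrongDual ℝ V), u' ∈ A u →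
      v₀' u + u' v₀ - u' u ≤ liminf a atTop := by
    intro u u' hu
    obtain ⟨w, w', hw_mem, hw, hw'⟩ := hconv u u' hu
    set b : ℕ → ℝ := fun n => v' n (w n) + w' n (v n) - w' n (w n) with hb
    have hb1 : Tendsto (fun n => v' n (w n)) atTop (𝓝 (v₀' u)) :=
      aux_weakstar_strong hC₁ (hweak' u) hw
    have hb2 : Tendsto (fun n => w' n (v n)) atTop (𝓝 (u' v₀)) := by
      have : Tendsto (fun n => ι (v n) (w' n)) atTop (𝓝 (ι v₀ u')) := by
        apply aux_weakstar_strong hC₂ _ hw'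
        simpa [hι, NormedSpace.dual_def] using hweak u'
      simpa [hι, NormedSpace.dual_def] using this
    have hb3 : Tendsto (fun n => w' n (w n)) atTop (𝓝 (u' u)) := by
      obtain ⟨C, hC⟩ := hw'.norm.bddAbove_range
      exact aux_weakstar_strong (fun n => hC ⟨n, rfl⟩)
        (hw'.eval_const u) hw
    have hbt : Tendsto b atTop (𝓝 (v₀' u + u' v₀ - u' u)) :=
      (hb1.add hb2).sub hb3
    have hba : ∀ n, b n ≤ a n := by
      intro n
      have h0 := (hAn n).1 (hmem n) (hw_mem n)
      simp only [ContinuousLinearMap.sub_apply, map_sub] at h0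
      simp only [hb, ha]
      linarith
    calc v₀' u + u' v₀ - u' u = liminf b atTop := hbt.liminf_eq.symm
      _ ≤ liminf a atTop :=
          liminf_le_liminf (Eventually.of_forall hba)
            hbt.isBoundedUnder_ge hbddle.isCoboundedUnder_ge
  -- membership in the graph of A
  have hmem₀ : v₀' ∈ A v₀ := by
    apply hA.2
    intro u u' hu
    have h1 := key u u' hu
    have h2 : liminf a atTop ≤ limsup a atTop :=
      liminf_le_limsup hbddle hbddge
    have h3 : v₀' u + u' v₀ - u' u ≤ v₀' v₀ := le_trans h1 (h2.trans hlimsup)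
    simp only [ContinuousLinearMap.sub_apply, map_sub]
    linarith
  refine ⟨hmem₀, ?_⟩
  have h1 := key v₀ v₀' hmem₀
  have h2 : liminf a atTop ≤ limsup a atTop := liminf_le_limsup hbddle hbddge
  have hinf : liminf a atTop = v₀' v₀ := le_antisymm (h2.trans hlimsup) (by linarith)
  have hsup : limsup a atTop = v₀' v₀ := le_antisymm hlimsup (hinf ▸ h2)
  exact tendsto_of_liminf_eq_limsup hinf hsup hbddle hbddge
end

section
/- Let V be a separable reflexive Banach space, (S, Σ(S), μ) a σ-finite μ-complete measurable space, and A : S → 𝔐(V × V*) a measurable map into the set of maximal monotone operators from V to V*. Let 𝒜 be the canonical extension of A from L^p(S,V) to L^q(S,V*), 1/p + 1/q = 1. If Gr 𝒜 ≠ ∅, then 𝒜 is maximal monotone. -/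
open Filter Topology NormedSpace MeasureTheory
open scoped ENNReal

variable {V : Type*} [NormedAddCommGroup V] [NormedSpace ℝ V]

/-- Measurability of a multivalued-operator–valued map `A : S → 𝔐(V × V*)`. -/
def MeasurableMultimap {S : Type*} [MeasurableSpace S]
    (A : S → V → Set (StrongDual ℝ V)) : Prop :=
  ∀ U : Set (V × StrongDual ℝ V), IsOpen U →
    MeasurableSet {x : S | ∃ p ∈ U, p.2 ∈ A x p.1}

variable {S : Type*} [MeasurableSpace S] {μ : Measure S}

/-- The canonical extension `𝒜` of `A : S → 𝔐(V × V*)` from `L^p(S,V)` to `L^q(S,V*)`: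
`v* ∈ 𝒜 v` iff `v*(x) ∈ A(x) (v(x))` for a.e. `x ∈ S`. -/
def canonExt (A : S → V → Set (StrongDual ℝ V)) (p q : ℝ≥0∞) (μ : Measure S)
    (v : Lp V p μ) : Set (Lp (StrongDual ℝ V) q μ) :=
  {v' | ∀ᵐ x ∂μ, v' x ∈ A x (v x)}

/-- The duality pairing `⟨v*, v⟩ = ∫_S ⟨v*(x), v(x)⟩ dμ` between `L^p(S,V)` and `L^q(S,V*)`. -/
noncomputable def LpPairing (p q : ℝ≥0∞) (μ : Measure S)
    (v : Lp V p μ) (v' : Lp (StrongDual ℝ V) q μ) : ℝ :=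
  ∫ x, (v' x) (v x) ∂μ

/-- Monotonicity of an operator from `L^p(S,V)` to `2^{L^q(S,V*)}` w.r.t. the duality pairing. -/
def LpMonotoneOp (p q : ℝ≥0∞) (μ : Measure S)
    (T : Lp V p μ → Set (Lp (StrongDual ℝ V) q μ)) : Prop :=
  ∀ ⦃v u : Lp V p μ⦄ ⦃v' u' : Lp (StrongDual ℝ V) q μ⦄, v' ∈ T v → u' ∈ T u →
    0 ≤ LpPairing p q μ (v - u) (v' - u')

/-- Maximal monotonicity of an operator from `L^p(S,V)` to `2^{L^q(S,V*)}`. -/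
def LpMaxMonotoneOp (p q : ℝ≥0∞) (μ : Measure S)
    (T : Lp V p μ → Set (Lp (StrongDual ℝ V) q μ)) : Prop :=
  LpMonotoneOp p q μ T ∧
  ∀ (v : Lp V p μ) (v' : Lp (StrongDual ℝ V) q μ),
    (∀ (u : Lp V p μ) (u' : Lp (StrongDual ℝ V) q μ), u' ∈ T u →
      0 ≤ LpPairing p q μ (v - u) (v' - u')) → v' ∈ T v


section AuxCanon
open scoped Classical

/-- If the dual of a real normed space is separable, so is the space itself. -/
lemma separableSpace_of_dual_separableSpace (X : Type*) [NormedAddCommGroup X]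
    [NormedSpace ℝ X] [TopologicalSpace.SeparableSpace (StrongDual ℝ X)] :
    TopologicalSpace.SeparableSpace X := by
  obtain ⟨f, hf⟩ : ∃ f : ℕ → StrongDual ℝ X, DenseRange f :=
    ⟨TopologicalSpace.denseSeq _, TopologicalSpace.denseRange_denseSeq _⟩
  have hx : ∀ n : ℕ, ∃ y : X, ‖y‖ ≤ 1 ∧ ‖f n‖ / 2 ≤ |(f n) y| := by
    intro n
    rcases eq_or_ne (f n) 0 with h0 | h0
    · exact ⟨0, by simp, by simp [h0]⟩
    · by_contra hcon
      push_neg at hcon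
      have : ‖f n‖ ≤ ‖f n‖ / 2 := by
        refine ContinuousLinearMap.opNorm_le_bound _ (by positivity) (fun y => ?_)
        rcases eq_or_ne y 0 with rfl | hy0
        · simp
        · have hnorm : (0:ℝ) < ‖y‖ := norm_pos_iff.mpr hy0
          have hunit : ‖‖y‖⁻¹ • y‖ ≤ 1 := by
            rw [norm_smul, norm_inv, norm_norm, inv_mul_cancel₀ (ne_of_gt hnorm)]
          have hlt := hcon (‖y‖⁻¹ • y) hunit
          have hfy : (f n) y = ‖y‖ * (f n) (‖y‖⁻¹ • y) := by
            rw [(f n).map_smul, smul_eq_mul, ← mul_assoc, mul_inv_cancel₀ (ne_of_gt hnorm), one_mul]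
          rw [Real.norm_eq_abs, hfy, abs_mul, abs_of_pos hnorm, mul_comm (‖f n‖/2)]
          exact mul_le_mul_of_nonneg_left hlt.le (le_of_lt hnorm)
      have hn : 0 < ‖f n‖ := norm_pos_iff.mpr h0
      linarith
  choose x hx1 hx2 using hx
  set D : Submodule ℝ X := Submodule.span ℝ (Set.range x) with hD
  have hclosure : closure (D : Set X) = Set.univ := by
    by_contra hne
    obtain ⟨z, hz⟩ : ∃ z : X, z ∉ closure (D : Set X) := by
      by_contra h
      push_neg at h
      exact hne (Set.eq_univ_iff_forall.2 h)
    obtain ⟨g, u, hgu, huz⟩ :=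
      geometric_hahn_banach_closed_point (s := closure (D : Set X))
        (D.convex.closure) isClosed_closure hz
    have hg0 : ∀ a ∈ D, g a = 0 := by
      intro a ha
      by_contra hga
      have hmem : ((u / g a) • a) ∈ D := D.smul_mem _ ha
      have := hgu ((u / g a) • a) (subset_closure hmem)
      rw [g.map_smul, smul_eq_mul, div_mul_cancel₀ _ hga] at this
      exact lt_irrefl u this
    have hu0 : 0 < u := by
      have := hgu 0 (subset_closure D.zero_mem)
      simpa using this
    have hgz : 0 < g z := lt_trans hu0 huz
    have hgne : g ≠ 0 := fun h => by simp [h] at hgz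
    have hgnorm : 0 < ‖g‖ := norm_pos_iff.mpr hgne
    obtain ⟨n, hn⟩ := hf.exists_dist_lt g (show (0:ℝ) < ‖g‖/4 by linarith)
    rw [dist_eq_norm] at hn
    have hfn_lb : ‖g‖ - ‖g‖/4 ≤ ‖f n‖ := by
      have := norm_sub_norm_le g (f n)
      linarith [this, hn.le]
    have h1 : |(f n) (x n)| ≤ ‖g‖ / 4 := by
      have : (f n) (x n) = ((f n) - g) (x n) + g (x n) := by simp
      have hg0n : g (x n) = 0 := hg0 (x n) (Submodule.subset_span ⟨n, rfl⟩)
      rw [this, hg0n, add_zero]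
      calc |((f n) - g) (x n)| ≤ ‖(f n) - g‖ * ‖x n‖ := (f n - g).le_opNorm _
      _ ≤ ‖(f n) - g‖ * 1 := by
          exact mul_le_mul_of_nonneg_left (hx1 n) (norm_nonneg _)
      _ = ‖g - f n‖ := by rw [mul_one, norm_sub_rev]
      _ ≤ ‖g‖ / 4 := hn.le
    have h2 := hx2 n
    -- ‖f n‖ ≥ 3/4 ‖g‖, so |f n (x n)| ≥ 3/8 ‖g‖ > ‖g‖/4
    linarith
  have hsep : TopologicalSpace.IsSeparable (Set.univ : Set X) := by
    rw [← hclosure]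
    exact ((Set.countable_range x).isSeparable.span).closure
  exact TopologicalSpace.isSeparable_univ_iff.mp hsep

lemma dual_separableSpace {V : Type*} [NormedAddCommGroup V] [NormedSpace ℝ V]
    [TopologicalSpace.SeparableSpace V]
    (hrefl : Function.Surjective (NormedSpace.inclusionInDoubleDual ℝ V)) :
    TopologicalSpace.SeparableSpace (StrongDual ℝ V) := by
  haveI : TopologicalSpace.SeparableSpace (StrongDual ℝ (StrongDual ℝ V)) :=
    (hrefl.denseRange).separableSpace (NormedSpace.inclusionInDoubleDual ℝ V).continuous
  exact separableSpace_of_dual_separableSpace (StrongDual ℝ V)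


noncomputable section SelAux

variable {M : Type*} [MetricSpace M]

/-- least index of a point of `d` whose ball of radius `r` meets `T`, else 0 -/
noncomputable def pickIdx (d : ℕ → M) (r : ℝ) (T : Set M) : ℕ :=
  if h : ∃ m, (T ∩ Metric.ball (d m) r).Nonempty then Nat.find h else 0

lemma pickIdx_spec (d : ℕ → M) (r : ℝ) (T : Set M)
    (h : ∃ m, (T ∩ Metric.ball (d m) r).Nonempty) :
    (T ∩ Metric.ball (d (pickIdx d r T)) r).Nonempty := by
  rw [pickIdx, dif_pos h]; exact Nat.find_spec h

lemma pickIdx_eq_iff (d : ℕ → M) (r : ℝ) (T : Set M) (m : ℕ) :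
    pickIdx d r T = m ↔
      ((T ∩ Metric.ball (d m) r).Nonempty ∧
        ∀ m' < m, ¬ (T ∩ Metric.ball (d m') r).Nonempty) ∨
      ((∀ m', ¬ (T ∩ Metric.ball (d m') r).Nonempty) ∧ m = 0) := by
  rw [pickIdx]
  split_ifs with h
  · constructor
    · rintro rfl
      exact Or.inl ⟨Nat.find_spec h, fun m' hm' => Nat.find_min h hm'⟩
    · rintro (⟨h1, h2⟩ | ⟨h1, rfl⟩)
      · exact le_antisymm (Nat.find_le h1) (by
          by_contra hlt
          push_neg at hlt
          exact h2 _ hlt (Nat.find_spec h))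
      · obtain ⟨m, hm⟩ := h
        exact absurd hm (h1 m)
  · push_neg at h
    constructor
    · rintro rfl
      exact Or.inr ⟨fun m' => by simpa [Set.not_nonempty_iff_eq_empty] using h m', rfl⟩
    · rintro (⟨h1, _⟩ | ⟨_, rfl⟩)
      · exact absurd h1 (by simpa [Set.not_nonempty_iff_eq_empty] using h m)
      · rfl

variable {S : Type*}

/-- nested refinement sets -/
noncomputable def selG (FF : S → Set M) (d : ℕ → M) (p₀ : M) (ε : ℝ) (r : ℕ → ℝ) :
    ℕ → S → Set M
  | 0 => fun x => FF x ∩ Metric.ball p₀ ε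
  | (k+1) => fun x =>
      selG FF d p₀ ε r k x ∩
        Metric.ball (d (pickIdx d (r k) (selG FF d p₀ ε r k x))) (r k)

end SelAux

section Sel

variable {V : Type*} [NormedAddCommGroup V] [NormedSpace ℝ V] [CompleteSpace V]
variable {S : Type*} [MeasurableSpace S]

/-- The basic measurable-selection lemma: on the set where the graph of `A x` meets the
ball `B(p₀, ε)`, one can select measurably a point of the graph within distance `ε` of `p₀`. -/
lemma exists_selection [TopologicalSpace.SeparableSpace (V × StrongDual ℝ V)]
    (A : S → V → Set (StrongDual ℝ V))
    (hclosed : ∀ x, IsClosed {p : V × StrongDual ℝ V | p.2 ∈ A x p.1})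
    (hAmeas : ∀ U : Set (V × StrongDual ℝ V), IsOpen U →
      MeasurableSet {x : S | ∃ p ∈ U, p.2 ∈ A x p.1})
    (p₀ : V × StrongDual ℝ V) {ε : ℝ} (hε : 0 < ε) :
    ∃ σ : S → V × StrongDual ℝ V, StronglyMeasurable σ ∧
      ∀ x : S, ({p : V × StrongDual ℝ V | p.2 ∈ A x p.1} ∩ Metric.ball p₀ ε).Nonempty →
        (σ x).2 ∈ A x (σ x).1 ∧ dist (σ x) p₀ ≤ ε := by
  classical
  borelize (V × StrongDual ℝ V)
  haveI : SecondCountableTopology (V × StrongDual ℝ V) :=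
    UniformSpace.secondCountable_of_separable _
  set FF : S → Set (V × StrongDual ℝ V) := fun x => {p | p.2 ∈ A x p.1} with hFF
  have hFFmeas : ∀ U : Set (V × StrongDual ℝ V), IsOpen U →
      MeasurableSet {x | (FF x ∩ U).Nonempty} := by
    intro U hU
    have heq : {x : S | (FF x ∩ U).Nonempty} = {x : S | ∃ p ∈ U, p.2 ∈ A x p.1} := by
      ext x
      simp only [Set.Nonempty, Set.mem_inter_iff, hFF, Set.mem_setOf_eq]
      exact ⟨fun ⟨p, h1, h2⟩ => ⟨p, h2, h1⟩, fun ⟨p, h1, h2⟩ => ⟨p, h2, h1⟩⟩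
    rw [heq]
    exact hAmeas U hU
  obtain ⟨d, hd⟩ : ∃ d : ℕ → (V × StrongDual ℝ V), DenseRange d :=
    ⟨TopologicalSpace.denseSeq _, TopologicalSpace.denseRange_denseSeq _⟩
  set r : ℕ → ℝ := fun k => ε * (2⁻¹ : ℝ) ^ (k + 1) with hrdef
  have hr : ∀ k, 0 < r k := fun k => by positivity
  set G : ℕ → S → Set (V × StrongDual ℝ V) := selG FF d p₀ ε r with hG
  have hG0 : ∀ x, G 0 x = FF x ∩ Metric.ball p₀ ε := fun x => by rw [hG]; rfl
  have hGsucc : ∀ k x, G (k+1) x =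
      G k x ∩ Metric.ball (d (pickIdx d (r k) (G k x))) (r k) := fun k x => by rw [hG]; rfl
  -- monotonicity
  have hGmono : ∀ k x, G (k+1) x ⊆ G k x := fun k x => by
    rw [hGsucc]; exact Set.inter_subset_left
  have hGle : ∀ x k l, k ≤ l → G l x ⊆ G k x := by
    intro x k l hkl
    induction l with
    | zero => simp_all
    | succ l ih =>
      rcases Nat.lt_or_ge k (l+1) with h | h
      · exact (hGmono l x).trans (ih (Nat.lt_succ_iff.mp h))
      · have : k = l + 1 := le_antisymm hkl h
        subst this; exact subset_rfl
  have hGsub : ∀ k x, G k x ⊆ FF x ∩ Metric.ball p₀ ε := fun k x => by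
    rw [← hG0]; exact hGle x 0 k (Nat.zero_le k)
  -- nonemptiness
  have hGne : ∀ x, (G 0 x).Nonempty → ∀ k, (G k x).Nonempty := by
    intro x hx k
    induction k with
    | zero => exact hx
    | succ k ih =>
      obtain ⟨y, hy⟩ := ih
      obtain ⟨m, hm⟩ := hd.exists_dist_lt y (hr k)
      have hex : ∃ m', (G k x ∩ Metric.ball (d m') (r k)).Nonempty :=
        ⟨m, y, hy, by rwa [Metric.mem_ball]⟩
      rw [hGsucc]
      exact pickIdx_spec d (r k) (G k x) hex
  -- measurability invariant
  have hGmeas : ∀ k, ∀ U : Set (V × StrongDual ℝ V), IsOpen U →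
      MeasurableSet {x | (G k x ∩ U).Nonempty} := by
    intro k
    induction k with
    | zero =>
      intro U hU
      have heq : {x | (G 0 x ∩ U).Nonempty}
          = {x | (FF x ∩ (Metric.ball p₀ ε ∩ U)).Nonempty} := by
        ext x
        simp only [Set.mem_setOf_eq, hG0, Set.inter_assoc]
      rw [heq]
      exact hFFmeas _ (Metric.isOpen_ball.inter hU)
    | succ k ih =>
      intro U hU
      have hpick : ∀ m : ℕ, MeasurableSet {x | pickIdx d (r k) (G k x) = m} := by
        intro m
        have heq : {x | pickIdx d (r k) (G k x) = m} =
            ({x | (G k x ∩ Metric.ball (d m) (r k)).Nonempty} ∩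
              ⋂ (m' : ℕ) (_ : m' < m),
                {x | (G k x ∩ Metric.ball (d m') (r k)).Nonempty}ᶜ) ∪
            ((⋂ m' : ℕ, {x | (G k x ∩ Metric.ball (d m') (r k)).Nonempty}ᶜ) ∩
              {x : S | m = 0}) := by
          ext x
          rw [Set.mem_setOf_eq, pickIdx_eq_iff]
          simp only [Set.mem_union, Set.mem_inter_iff, Set.mem_iInter, Set.mem_compl_iff,
            Set.mem_setOf_eq]
        rw [heq]
        refine MeasurableSet.union ?_ ?_
        · exact (ih _ Metric.isOpen_ball).inter
            (MeasurableSet.iInter fun m' => MeasurableSet.iInter fun _ =>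
              (ih _ Metric.isOpen_ball).compl)
        · refine (MeasurableSet.iInter fun m' => (ih _ Metric.isOpen_ball).compl).inter ?_
          by_cases hm : m = 0 <;> simp [hm]
      have heq : {x | (G (k+1) x ∩ U).Nonempty} =
          ⋃ m : ℕ, ({x | pickIdx d (r k) (G k x) = m} ∩
            {x | (G k x ∩ (Metric.ball (d m) (r k) ∩ U)).Nonempty}) := by
        ext x
        simp only [Set.mem_iUnion, Set.mem_inter_iff, Set.mem_setOf_eq]
        constructor
        · intro hne
          refine ⟨pickIdx d (r k) (G k x), rfl, ?_⟩
          rw [hGsucc] at hne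
          rwa [← Set.inter_assoc]
        · rintro ⟨m, hm, hne⟩
          rw [hGsucc, hm]
          rwa [Set.inter_assoc]
      rw [heq]
      exact MeasurableSet.iUnion fun m =>
        (hpick m).inter (ih _ (Metric.isOpen_ball.inter hU))
  -- centers
  set c : ℕ → S → (V × StrongDual ℝ V) := fun k x => d (pickIdx d (r k) (G k x)) with hc
  have hcmeas : ∀ k, Measurable (c k) := by
    intro k
    have hpickmeas : Measurable (fun x => pickIdx d (r k) (G k x)) := by
      refine measurable_to_countable' (fun m => ?_)
      have heq : (fun x => pickIdx d (r k) (G k x)) ⁻¹' {m}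
          = {x | pickIdx d (r k) (G k x) = m} := by ext x; simp
      rw [heq]
      -- same as hpick above, but outside the induction; reprove
      have heq2 : {x | pickIdx d (r k) (G k x) = m} =
          ({x | (G k x ∩ Metric.ball (d m) (r k)).Nonempty} ∩
            ⋂ (m' : ℕ) (_ : m' < m),
              {x | (G k x ∩ Metric.ball (d m') (r k)).Nonempty}ᶜ) ∪
          ((⋂ m' : ℕ, {x | (G k x ∩ Metric.ball (d m') (r k)).Nonempty}ᶜ) ∩
            {x : S | m = 0}) := by
        ext x
        rw [Set.mem_setOf_eq, pickIdx_eq_iff]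
        simp only [Set.mem_union, Set.mem_inter_iff, Set.mem_iInter, Set.mem_compl_iff,
          Set.mem_setOf_eq]
      rw [heq2]
      refine MeasurableSet.union ?_ ?_
      · exact (hGmeas k _ Metric.isOpen_ball).inter
          (MeasurableSet.iInter fun m' => MeasurableSet.iInter fun _ =>
            (hGmeas k _ Metric.isOpen_ball).compl)
      · refine (MeasurableSet.iInter fun m' => (hGmeas k _ Metric.isOpen_ball).compl).inter ?_
        by_cases hm : m = 0 <;> simp [hm]
    exact measurable_from_top.comp hpickmeas
  -- the nonemptiness set
  have hS0meas : MeasurableSet {x | (G 0 x).Nonempty} := by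
    have heq : {x | (G 0 x).Nonempty} = {x | (G 0 x ∩ Set.univ).Nonempty} := by
      simp [Set.inter_univ]
    rw [heq]
    exact hGmeas 0 _ isOpen_univ
  -- key convergence claim
  have CLAIM : ∀ x, (G 0 x).Nonempty →
      ∃ L : V × StrongDual ℝ V, Tendsto (fun k => c k x) atTop (𝓝 L) ∧
        L ∈ FF x ∧ dist L p₀ ≤ ε := by
    intro x hx
    choose q hq using fun k => hGne x hx (k+1)
    have hqc : ∀ k, dist (q k) (c k x) < r k := by
      intro k
      have := hq k
      rw [hGsucc] at this
      exact Metric.mem_ball.mp this.2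
    have hcauchy : CauchySeq q := by
      refine cauchySeq_of_le_tendsto_0 (fun N => 2 * r N) (fun n m N hn hm => ?_) ?_
      · have hqn : q n ∈ Metric.ball (c N x) (r N) := by
          have h1 : G (n+1) x ⊆ G (N+1) x := hGle x (N+1) (n+1) (by omega)
          have h2 := h1 (hq n)
          rw [hGsucc] at h2
          exact h2.2
        have hqm : q m ∈ Metric.ball (c N x) (r N) := by
          have h1 : G (m+1) x ⊆ G (N+1) x := hGle x (N+1) (m+1) (by omega)
          have h2 := h1 (hq m)
          rw [hGsucc] at h2
          exact h2.2
        calc dist (q n) (q m) ≤ dist (q n) (c N x) + dist (c N x) (q m) := dist_triangle _ _ _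
        _ ≤ r N + r N := by
            rw [dist_comm (c N x) (q m)]
            rw [Metric.mem_ball] at hqn hqm
            linarith
        _ = 2 * r N := by ring
      · have : Tendsto (fun N : ℕ => (2 * ε * 2⁻¹) * (2⁻¹ : ℝ) ^ N) atTop (𝓝 0) := by
          have hgeo : Tendsto (fun N : ℕ => (2⁻¹ : ℝ) ^ N) atTop (𝓝 0) :=
            tendsto_pow_atTop_nhds_zero_of_lt_one (by norm_num) (by norm_num)
          simpa using hgeo.const_mul (2 * ε * 2⁻¹)
        convert this using 2 with N
        rw [hrdef]
        ring
    obtain ⟨L, hL⟩ := cauchySeq_tendsto_of_complete hcauchy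
    refine ⟨L, ?_, ?_, ?_⟩
    · rw [tendsto_iff_dist_tendsto_zero]
      have hb : ∀ k, dist (c k x) L ≤ r k + dist (q k) L := fun k => by
        calc dist (c k x) L ≤ dist (c k x) (q k) + dist (q k) L := dist_triangle _ _ _
        _ ≤ r k + dist (q k) L := by
            rw [dist_comm (c k x)]
            linarith [hqc k]
      have hb0 : Tendsto (fun k => r k + dist (q k) L) atTop (𝓝 0) := by
        have h1 : Tendsto r atTop (𝓝 0) := by
          have hgeo : Tendsto (fun N : ℕ => (2⁻¹ : ℝ) ^ N) atTop (𝓝 0) :=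
            tendsto_pow_atTop_nhds_zero_of_lt_one (by norm_num) (by norm_num)
          have := hgeo.const_mul (ε * 2⁻¹)
          rw [mul_zero] at this
          convert this using 2 with N
          rw [hrdef]; ring
        have h2 : Tendsto (fun k => dist (q k) L) atTop (𝓝 0) :=
          tendsto_iff_dist_tendsto_zero.mp hL
        simpa using h1.add h2
      exact squeeze_zero (fun k => dist_nonneg) hb hb0
    · refine (hclosed x).mem_of_tendsto hL (Eventually.of_forall fun k => ?_)
      exact ((hGsub (k+1) x) (hq k)).1
    · have hdq : Tendsto (fun k => dist (q k) p₀) atTop (𝓝 (dist L p₀)) :=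
        (hL.dist tendsto_const_nhds)
      refine le_of_tendsto hdq (Eventually.of_forall fun k => ?_)
      exact le_of_lt (Metric.mem_ball.mp ((hGsub (k+1) x) (hq k)).2)
  -- define the selection
  set σ : S → (V × StrongDual ℝ V) := fun x =>
    if hx : (G 0 x).Nonempty then (CLAIM x hx).choose else p₀ with hσ
  have hσmeas : Measurable σ := by
    apply measurable_of_tendsto_metrizable
      (f := fun k x => if (G 0 x).Nonempty then c k x else p₀)
    · intro k
      exact Measurable.ite hS0meas (hcmeas k) measurable_const
    · rw [tendsto_pi_nhds]
      intro x
      by_cases hx : (G 0 x).Nonempty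
      · simp only [hx, if_true, hσ, dif_pos hx]
        exact (CLAIM x hx).choose_spec.1
      · simp only [hx, if_false, hσ, dif_neg hx]
        exact tendsto_const_nhds
  refine ⟨σ, hσmeas.stronglyMeasurable, fun x hx => ?_⟩
  have hx0 : (G 0 x).Nonempty := by rw [hG0]; exact hx
  have hspec := (CLAIM x hx0).choose_spec
  rw [hσ]
  simp only [dif_pos hx0]
  exact ⟨hspec.2.1, hspec.2.2⟩

end Sel

variable {V : Type*} [NormedAddCommGroup V] [NormedSpace ℝ V]

lemma continuous_dualPair : Continuous (fun p : (StrongDual ℝ V) × V => p.1 p.2) :=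
  isBoundedBilinearMap_apply.continuous

/-- perturbation bound for the monotonicity pairing -/
lemma pair_perturb (v a b : V) (v' a' b' : StrongDual ℝ V) :
    |(v' - b') (v - b) - (v' - a') (v - a)| ≤
      max ‖a - b‖ ‖a' - b'‖ * (‖v‖ + ‖v'‖ + ‖a‖ + ‖b'‖) := by
  have hid : (v' - b') (v - b) - (v' - a') (v - a)
      = (a' - b') (v - a) + (v' - b') (a - b) := by
    simp only [ContinuousLinearMap.sub_apply, map_sub]
    ring
  rw [hid]
  have h1 : |(a' - b') (v - a)| ≤ ‖a' - b'‖ * (‖v‖ + ‖a‖) := by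
    calc |(a' - b') (v - a)| ≤ ‖a' - b'‖ * ‖v - a‖ := (a' - b').le_opNorm _
    _ ≤ ‖a' - b'‖ * (‖v‖ + ‖a‖) :=
        mul_le_mul_of_nonneg_left (norm_sub_le _ _) (norm_nonneg _)
  have h2 : |(v' - b') (a - b)| ≤ (‖v'‖ + ‖b'‖) * ‖a - b‖ := by
    calc |(v' - b') (a - b)| ≤ ‖v' - b'‖ * ‖a - b‖ := (v' - b').le_opNorm _
    _ ≤ (‖v'‖ + ‖b'‖) * ‖a - b‖ :=
        mul_le_mul_of_nonneg_right (norm_sub_le _ _) (norm_nonneg _)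
  have hm1 : ‖a' - b'‖ ≤ max ‖a - b‖ ‖a' - b'‖ := le_max_right _ _
  have hm2 : ‖a - b‖ ≤ max ‖a - b‖ ‖a' - b'‖ := le_max_left _ _
  have habs := abs_add_le ((a' - b') (v - a)) ((v' - b') (a - b))
  have hb1 : ‖a' - b'‖ * (‖v‖ + ‖a‖) ≤ max ‖a - b‖ ‖a' - b'‖ * (‖v‖ + ‖a‖) :=
    mul_le_mul_of_nonneg_right hm1 (by positivity)
  have hb2 : (‖v'‖ + ‖b'‖) * ‖a - b‖ ≤ (‖v'‖ + ‖b'‖) * max ‖a - b‖ ‖a' - b'‖ :=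
    mul_le_mul_of_nonneg_left hm2 (by positivity)
  calc |(a' - b') (v - a) + (v' - b') (a - b)|
      ≤ |(a' - b') (v - a)| + |(v' - b') (a - b)| := habs
  _ ≤ max ‖a - b‖ ‖a' - b'‖ * (‖v‖ + ‖a‖) + (‖v'‖ + ‖b'‖) * max ‖a - b‖ ‖a' - b'‖ := by
      linarith
  _ = max ‖a - b‖ ‖a' - b'‖ * (‖v‖ + ‖v'‖ + ‖a‖ + ‖b'‖) := by ring

/-- graph of a maximal monotone operator is closed -/
lemma maxMonotone_graph_closed {A : V → Set (StrongDual ℝ V)} (hA : MaxMonotoneOp A) :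
    IsClosed {p : V × StrongDual ℝ V | p.2 ∈ A p.1} := by
  have heq : {p : V × StrongDual ℝ V | p.2 ∈ A p.1}
      = ⋂ (u : V) (u' : StrongDual ℝ V) (_ : u' ∈ A u),
          {p : V × StrongDual ℝ V | 0 ≤ (p.2 - u') (p.1 - u)} := by
    ext p
    simp only [Set.mem_setOf_eq, Set.mem_iInter]
    constructor
    · intro hp u u' hu'
      exact hA.1 hp hu'
    · intro hp
      exact hA.2 p.1 p.2 (fun u u' hu' => hp u u' hu')
  rw [heq]
  refine isClosed_iInter fun u => isClosed_iInter fun u' => isClosed_iInter fun _ => ?_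
  have hcont : Continuous (fun p : V × StrongDual ℝ V => (p.2 - u') (p.1 - u)) := by
    have h1 : Continuous (fun p : V × StrongDual ℝ V => ((p.2 - u' : StrongDual ℝ V), (p.1 - u : V))) :=
      ((continuous_snd.sub continuous_const).prodMk (continuous_fst.sub continuous_const))
    exact continuous_dualPair.comp h1
  exact isClosed_le continuous_const hcont

/-- the analytic convergence lemma -/
lemma ae_eq_zero_of_antitone_integral_nonneg {S : Type*} [MeasurableSpace S]
    {μ : MeasureTheory.Measure S} [SigmaFinite μ] {ψ : ℕ → S → ℝ} {ρ : S → ℝ}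
    (hint : ∀ k, Integrable (ψ k) μ)
    (hanti : ∀ x, Antitone (fun k => ψ k x))
    (hlim : ∀ x, Tendsto (fun k => ψ k x) atTop (𝓝 (ρ x)))
    (hρm : StronglyMeasurable ρ)
    (hρb : ∀ x, -1 ≤ ρ x)
    (hρ0 : ∀ᵐ x ∂μ, ρ x ≤ 0)
    (hpos : ∀ k, 0 ≤ ∫ x, ψ k x ∂μ) :
    ∀ᵐ x ∂μ, ρ x = 0 := by
  -- first : ∫ max (ψ k) 0 → 0  over any measurable set
  have hψp_int : ∀ k, Integrable (fun x => max (ψ k x) 0) μ := fun k => (hint k).pos_part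
  have hmaxanti : ∀ x, Antitone (fun k => max (ψ k x) 0) :=
    fun x k l hkl => max_le_max (hanti x hkl) le_rfl
  -- main step: for δ > 0 and finite-measure Z ⊆ {ρ ≤ -δ}, μ Z = 0
  have hZ : ∀ (δ : ℝ), 0 < δ → ∀ (Z : Set S), MeasurableSet Z → μ Z ≠ ⊤ →
      (∀ x ∈ Z, ρ x ≤ -δ) → μ Z = 0 := by
    intro δ hδ Z hZm hZfin hZρ
    haveI : IsFiniteMeasure (μ.restrict Z) :=
      ⟨by rwa [Measure.restrict_apply_univ, lt_top_iff_ne_top]⟩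
    -- ∫_Z ψ k → ∫_Z ρ
    have hρZ_int : IntegrableOn ρ Z μ := by
      have hbdd : ∀ᵐ x ∂(μ.restrict Z), ‖ρ x‖ ≤ 1 + ‖ψ 0 x‖ := by
        refine Eventually.of_forall (fun x => ?_)
        have h1 : ρ x ≤ ψ 0 x := le_of_tendsto (hlim x)
          (Eventually.of_forall (fun k => hanti x (Nat.zero_le k)))
        have h2 := hρb x
        rw [Real.norm_eq_abs, abs_le]
        have h3 := norm_nonneg (ψ 0 x)
        constructor
        · linarith
        · calc ρ x ≤ ψ 0 x := h1
          _ ≤ ‖ψ 0 x‖ := le_abs_self _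
          _ ≤ 1 + ‖ψ 0 x‖ := by linarith
      refine Integrable.mono ((integrable_const (1:ℝ)).add ((hint 0).restrict (s := Z)).norm)
        (hρm.aestronglyMeasurable.restrict) ?_
      filter_upwards [hbdd] with x hx
      have h4 := norm_nonneg (ψ 0 x)
      simp only [Pi.add_apply]
      rw [Real.norm_of_nonneg (by positivity : (0:ℝ) ≤ (1:ℝ) + ‖ψ 0 x‖)]
      exact hx
    have hZc : Tendsto (fun k => ∫ x in Z, ψ k x ∂μ) atTop (𝓝 (∫ x in Z, ρ x ∂μ)) := by
      refine integral_tendsto_of_tendsto_of_antitone (fun k => (hint k).restrict)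
        hρZ_int ?_ ?_
      · exact Eventually.of_forall (fun x => hanti x)
      · exact Eventually.of_forall (fun x => hlim x)
    -- ∫_{Zᶜ} (ψ k)⁺ → 0
    have hmax0 : ∀ᵐ x ∂(μ.restrict Zᶜ), Tendsto (fun k => max (ψ k x) 0) atTop (𝓝 0) := by
      refine ae_restrict_of_ae ?_
      filter_upwards [hρ0] with x hx
      have : Tendsto (fun k => max (ψ k x) 0) atTop (𝓝 (max (ρ x) 0)) :=
        ((continuous_max.comp (continuous_id.prodMk continuous_const)).tendsto _).comp (hlim x)
      rwa [max_eq_right hx] at this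
    have hZcc : Tendsto (fun k => ∫ x in Zᶜ, max (ψ k x) 0 ∂μ) atTop (𝓝 0) := by
      have key := integral_tendsto_of_tendsto_of_antitone (F := fun _ => (0:ℝ))
        (fun k => (hψp_int k).restrict) (integrable_zero _ _ _)
        (Eventually.of_forall (fun x => hmaxanti x)) hmax0
      simpa using key
    -- combine
    have hsplit : ∀ k, (0:ℝ) ≤ ∫ x in Z, ψ k x ∂μ + ∫ x in Zᶜ, max (ψ k x) 0 ∂μ := by
      intro k
      have h1 : ∫ x, ψ k x ∂μ = ∫ x in Z, ψ k x ∂μ + ∫ x in Zᶜ, ψ k x ∂μ :=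
        (integral_add_compl hZm (hint k)).symm
      have h2 : ∫ x in Zᶜ, ψ k x ∂μ ≤ ∫ x in Zᶜ, max (ψ k x) 0 ∂μ :=
        integral_mono ((hint k).restrict) ((hψp_int k).restrict)
          (fun x => le_max_left _ _)
      have := hpos k
      linarith
    have hlimit : (0:ℝ) ≤ ∫ x in Z, ρ x ∂μ := by
      have := le_of_tendsto_of_tendsto' tendsto_const_nhds (hZc.add hZcc) hsplit
      simpa using this
    -- but ∫_Z ρ ≤ -δ μ Z
    have hub : ∫ x in Z, ρ x ∂μ ≤ ∫ x in Z, (-δ) ∂μ := by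
      refine integral_mono_ae hρZ_int (integrable_const _) ?_
      rw [EventuallyLE, ae_restrict_iff' hZm]
      exact Eventually.of_forall (fun x hx => hZρ x hx)
    rw [integral_const, measureReal_def, Measure.restrict_apply_univ, smul_eq_mul] at hub
    have hμZr : (0:ℝ) ≤ -δ * (μ Z).toReal := by
      rw [mul_comm] at hub
      linarith
    have : (μ Z).toReal = 0 := by nlinarith [ENNReal.toReal_nonneg (a := μ Z)]
    exact (ENNReal.toReal_eq_zero_iff _).mp this |>.resolve_right hZfin
  -- conclude
  have hcover : μ {x | ρ x < 0} = 0 := by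
    have hsub : {x | ρ x < 0} ⊆
        ⋃ (l : ℕ) (m : ℕ), (MeasureTheory.spanningSets μ m ∩ {x | ρ x ≤ -(1 / (l + 1))}) := by
      intro x hx
      simp only [Set.mem_setOf_eq] at hx
      obtain ⟨l, hl⟩ : ∃ l : ℕ, ρ x ≤ -(1 / ((l:ℝ) + 1)) := by
        obtain ⟨l, hl⟩ := exists_nat_one_div_lt (show (0:ℝ) < -ρ x by linarith)
        exact ⟨l, by push_cast at hl ⊢; linarith⟩
      obtain ⟨m, hm⟩ : ∃ m, x ∈ MeasureTheory.spanningSets μ m := by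
        have h1 := MeasureTheory.iUnion_spanningSets μ
        have hx' : x ∈ ⋃ m, MeasureTheory.spanningSets μ m := by rw [h1]; trivial
        exact Set.mem_iUnion.mp hx'
      exact Set.mem_iUnion.mpr ⟨l, Set.mem_iUnion.mpr ⟨m, hm, hl⟩⟩
    refine measure_mono_null hsub ?_
    refine measure_iUnion_null fun l => measure_iUnion_null fun m => ?_
    have hWm : MeasurableSet
        (MeasureTheory.spanningSets μ m ∩ {x | ρ x ≤ -(1 / ((l:ℝ) + 1))}) :=
      (MeasureTheory.measurableSet_spanningSets μ m).inter
        (measurableSet_le hρm.measurable measurable_const)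
    refine hZ (1 / ((l:ℝ) + 1)) (by positivity) _ hWm ?_ ?_
    · exact ((measure_mono Set.inter_subset_left).trans_lt
        (MeasureTheory.measure_spanningSets_lt_top μ m)).ne
    · exact fun x hx => hx.2
  have hae : ∀ᵐ x ∂μ, ¬ ρ x < 0 := by
    rw [ae_iff]
    simpa using hcover
  filter_upwards [hρ0, hae] with x h1 h2
  push_neg at h2
  linarith

lemma graph_inter_open_meas {V : Type*} [NormedAddCommGroup V] [NormedSpace ℝ V]
    {S : Type*} [MeasurableSpace S] {A : S → V → Set (StrongDual ℝ V)}
    (hAmeas : ∀ U : Set (V × StrongDual ℝ V), IsOpen U →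
      MeasurableSet {x : S | ∃ p ∈ U, p.2 ∈ A x p.1})
    {U : Set (V × StrongDual ℝ V)} (hU : IsOpen U) :
    MeasurableSet {x : S | ({p : V × StrongDual ℝ V | p.2 ∈ A x p.1} ∩ U).Nonempty} := by
  have heq : {x : S | ({p : V × StrongDual ℝ V | p.2 ∈ A x p.1} ∩ U).Nonempty}
      = {x : S | ∃ p ∈ U, p.2 ∈ A x p.1} := by
    ext x
    simp only [Set.Nonempty, Set.mem_inter_iff, Set.mem_setOf_eq]
    exact ⟨fun ⟨p, h1, h2⟩ => ⟨p, h2, h1⟩, fun ⟨p, h1, h2⟩ => ⟨p, h2, h1⟩⟩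
  rw [heq]
  exact hAmeas U hU

end AuxCanon

set_option maxHeartbeats 2000000 in
/-- Let `V` be a separable reflexive Banach space, `(S,Σ,μ)` a σ-finite
complete measure space, `A : S → 𝔐(V × V*)` measurable with each `A(x)` maximal monotone,
and let `𝒜` be the canonical extension of `A` from `L^p(S,V)` to `L^q(S,V*)`
(`1/p + 1/q = 1`).  If `Gr 𝒜 ≠ ∅` then `𝒜` is maximal monotone. -/
theorem canonExt_maxMonotone
    [CompleteSpace V] [TopologicalSpace.SeparableSpace V]
    (hrefl : Function.Surjective (NormedSpace.inclusionInDoubleDual ℝ V))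
    (hsf : SigmaFinite μ) (hcomp : μ.IsComplete)
    (p q : ℝ) (hp : 1 < p) (hq : 1 < q) (hpq : 1 / p + 1 / q = 1)
    (A : S → V → Set (StrongDual ℝ V))
    (hAmax : ∀ x, MaxMonotoneOp (A x)) (hAmeas : MeasurableMultimap A)
    (hne : ∃ (v : Lp V (ENNReal.ofReal p) μ) (v' : Lp (StrongDual ℝ V) (ENNReal.ofReal q) μ),
      v' ∈ canonExt A (ENNReal.ofReal p) (ENNReal.ofReal q) μ v) :
    LpMaxMonotoneOp (ENNReal.ofReal p) (ENNReal.ofReal q) μ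
      (canonExt A (ENNReal.ofReal p) (ENNReal.ofReal q) μ) := by
  classical
  haveI := hsf
  haveI : TopologicalSpace.SeparableSpace (StrongDual ℝ V) := dual_separableSpace hrefl
  have hppos : (0:ℝ) < p := by linarith
  have hqpos : (0:ℝ) < q := by linarith
  set P := ENNReal.ofReal p with hPdef
  set Q := ENNReal.ofReal q with hQdef
  have hP1 : 1 ≤ P := by
    rw [hPdef, ← ENNReal.ofReal_one]
    exact ENNReal.ofReal_le_ofReal hp.le
  have hQ1 : 1 ≤ Q := by
    rw [hQdef, ← ENNReal.ofReal_one]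
    exact ENNReal.ofReal_le_ofReal hq.le
  have hPtop : P ≠ ⊤ := ENNReal.ofReal_ne_top
  have hQtop : Q ≠ ⊤ := ENNReal.ofReal_ne_top
  have hconj : 1 / (1:ℝ≥0∞) = 1 / Q + 1 / P := by
    rw [hPdef, hQdef]
    rw [one_div, one_div, one_div, ← ENNReal.ofReal_inv_of_pos hqpos,
      ← ENNReal.ofReal_inv_of_pos hppos, ← ENNReal.ofReal_add (by positivity) (by positivity)]
    rw [inv_one, ← ENNReal.ofReal_one]
    congr 1
    rw [← one_div, ← one_div]
    linarith
  -- integrability of the pointwise pairing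
  have hpair_int : ∀ (f : S → V) (g : S → StrongDual ℝ V), MemLp f P μ → MemLp g Q μ →
      Integrable (fun x => ‖g x‖ * ‖f x‖) μ := by
    intro f g hf hg
    have h1 : MemLp ((fun x => ‖g x‖) • (fun x => ‖f x‖)) 1 μ :=
      MemLp.smul (hpqr := ⟨by simpa [one_div] using hconj.symm⟩) hf.norm hg.norm
    have h2 : ((fun x : S => ‖g x‖) • (fun x : S => ‖f x‖)) = fun x => ‖g x‖ * ‖f x‖ := by
      funext x
      simp [Pi.smul_apply', smul_eq_mul]
    rw [h2] at h1
    exact memLp_one_iff_integrable.mp h1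
  have hpair_int' : ∀ (f : S → V) (g : S → StrongDual ℝ V), MemLp f P μ → MemLp g Q μ →
      Integrable (fun x => (g x) (f x)) μ := by
    intro f g hf hg
    refine (hpair_int f g hf hg).mono ?_ ?_
    · exact continuous_dualPair.comp_aestronglyMeasurable (hg.1.prodMk hf.1)
    · refine Eventually.of_forall (fun x => ?_)
      rw [Real.norm_eq_abs]
      calc |(g x) (f x)| ≤ ‖g x‖ * ‖f x‖ := (g x).le_opNorm _
      _ ≤ |‖g x‖ * ‖f x‖| := le_abs_self _
  constructor
  · -- monotonicity
    intro v u v' u' hv hu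
    simp only [canonExt, Set.mem_setOf_eq] at hv hu
    refine integral_nonneg_of_ae ?_
    filter_upwards [hv, hu, Lp.coeFn_sub v u, Lp.coeFn_sub v' u'] with x h1 h2 h3 h4
    rw [h3, h4, Pi.sub_apply, Pi.sub_apply]
    exact (hAmax x).1 h1 h2
  · -- maximality
    intro v v' H
    obtain ⟨w, w', hw⟩ := hne
    simp only [canonExt, Set.mem_setOf_eq] at hw ⊢
    -- notation for representatives
    set vf : S → V := ⇑v with hvfdef
    set v'f : S → StrongDual ℝ V := ⇑v' with hv'fdef
    set wf : S → V := ⇑w with hwfdef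
    set w'f : S → StrongDual ℝ V := ⇑w' with hw'fdef
    have hvfm : StronglyMeasurable vf := Lp.stronglyMeasurable v
    have hv'fm : StronglyMeasurable v'f := Lp.stronglyMeasurable v'
    have hwfm : StronglyMeasurable wf := Lp.stronglyMeasurable w
    have hw'fm : StronglyMeasurable w'f := Lp.stronglyMeasurable w'
    have hvP : MemLp vf P μ := Lp.memLp v
    have hv'Q : MemLp v'f Q μ := Lp.memLp v'
    have hwP : MemLp wf P μ := Lp.memLp w
    have hw'Q : MemLp w'f Q μ := Lp.memLp w'
    -- dense sequence in the product space
    obtain ⟨d, hd⟩ : ∃ d : ℕ → V × StrongDual ℝ V, DenseRange d :=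
      ⟨TopologicalSpace.denseSeq _, TopologicalSpace.denseRange_denseSeq _⟩
    set ε : ℕ → ℝ := fun n => (2⁻¹ : ℝ) ^ n with hεdef
    have hεpos : ∀ n, 0 < ε n := fun n => by positivity
    have hεle1 : ∀ n, ε n ≤ 1 := fun n => by
      rw [hεdef]
      calc ((2:ℝ)⁻¹) ^ n ≤ 1 ^ n := pow_le_pow_left₀ (by norm_num) (by norm_num) n
      _ = 1 := one_pow n
    have hεtend : Tendsto ε atTop (𝓝 0) :=
      tendsto_pow_atTop_nhds_zero_of_lt_one (by norm_num) (by norm_num)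
    -- selections
    have hsel : ∀ j : ℕ, ∃ σ : S → V × StrongDual ℝ V, StronglyMeasurable σ ∧
        ∀ x : S, ({p : V × StrongDual ℝ V | p.2 ∈ A x p.1} ∩
            Metric.ball (d (Nat.unpair j).1) (ε (Nat.unpair j).2)).Nonempty →
          (σ x).2 ∈ A x (σ x).1 ∧ dist (σ x) (d (Nat.unpair j).1) ≤ ε (Nat.unpair j).2 :=
      fun j => exists_selection A (fun x => maxMonotone_graph_closed (hAmax x)) hAmeas
        (d (Nat.unpair j).1) (hεpos (Nat.unpair j).2)
    choose σ hσm hσp using hsel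
    set Sp : ℕ → Set S := fun j => {x | ({p : V × StrongDual ℝ V | p.2 ∈ A x p.1} ∩
        Metric.ball (d (Nat.unpair j).1) (ε (Nat.unpair j).2)).Nonempty} with hSpdef
    have hSpmeas : ∀ j, MeasurableSet (Sp j) :=
      fun j => graph_inter_open_meas hAmeas Metric.isOpen_ball
    -- bound for selections on Sp j
    set Cb : ℕ → ℝ := fun j => ‖d (Nat.unpair j).1‖ + 1 with hCbdef
    have hCbnn : ∀ j, 0 ≤ Cb j := fun j => by positivity
    have hσbound : ∀ j x, x ∈ Sp j → ‖(σ j x).1‖ ≤ Cb j ∧ ‖(σ j x).2‖ ≤ Cb j := by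
      intro j x hx
      have hdist := (hσp j x hx).2
      rw [Prod.dist_eq] at hdist
      have h1 : dist (σ j x).1 (d (Nat.unpair j).1).1 ≤ ε (Nat.unpair j).2 :=
        le_trans (le_max_left _ _) hdist
      have h2 : dist (σ j x).2 (d (Nat.unpair j).1).2 ≤ ε (Nat.unpair j).2 :=
        le_trans (le_max_right _ _) hdist
      have hd1 : ‖(d (Nat.unpair j).1).1‖ ≤ ‖d (Nat.unpair j).1‖ := norm_fst_le _
      have hd2 : ‖(d (Nat.unpair j).1).2‖ ≤ ‖d (Nat.unpair j).1‖ := norm_snd_le _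
      have hεj := hεle1 (Nat.unpair j).2
      have key1 : ‖(σ j x).1‖ ≤ ‖(d (Nat.unpair j).1).1‖ + dist (σ j x).1 (d (Nat.unpair j).1).1 := by
        rw [dist_eq_norm]
        calc ‖(σ j x).1‖ = ‖((σ j x).1 - (d (Nat.unpair j).1).1) + (d (Nat.unpair j).1).1‖ := by
              rw [sub_add_cancel]
        _ ≤ ‖(σ j x).1 - (d (Nat.unpair j).1).1‖ + ‖(d (Nat.unpair j).1).1‖ := norm_add_le _ _
        _ = ‖(d (Nat.unpair j).1).1‖ + ‖(σ j x).1 - (d (Nat.unpair j).1).1‖ := by ring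
      have key2 : ‖(σ j x).2‖ ≤ ‖(d (Nat.unpair j).1).2‖ + dist (σ j x).2 (d (Nat.unpair j).1).2 := by
        rw [dist_eq_norm]
        calc ‖(σ j x).2‖ = ‖((σ j x).2 - (d (Nat.unpair j).1).2) + (d (Nat.unpair j).1).2‖ := by
              rw [sub_add_cancel]
        _ ≤ ‖(σ j x).2 - (d (Nat.unpair j).1).2‖ + ‖(d (Nat.unpair j).1).2‖ := norm_add_le _ _
        _ = ‖(d (Nat.unpair j).1).2‖ + ‖(σ j x).2 - (d (Nat.unpair j).1).2‖ := by ring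
      constructor
      · rw [hCbdef]; dsimp only; linarith
      · rw [hCbdef]; dsimp only; linarith
    -- pointwise functions
    set g : ℕ → S → ℝ := fun j x => (v'f x - (σ j x).2) (vf x - (σ j x).1) with hgdef
    set h₀ : S → ℝ := fun x => (v'f x - w'f x) (vf x - wf x) with hh₀def
    have hgm : ∀ j, StronglyMeasurable (g j) := by
      intro j
      have hprod : StronglyMeasurable (fun x => ((v'f x - (σ j x).2 : StrongDual ℝ V),
          (vf x - (σ j x).1 : V))) := by
        refine StronglyMeasurable.prodMk ?_ ?_
        · exact hv'fm.sub (continuous_snd.comp_stronglyMeasurable (hσm j))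
        · exact hvfm.sub (continuous_fst.comp_stronglyMeasurable (hσm j))
      exact continuous_dualPair.comp_stronglyMeasurable hprod
    have hh₀m : StronglyMeasurable h₀ := by
      have hprod : StronglyMeasurable (fun x => ((v'f x - w'f x : StrongDual ℝ V),
          (vf x - wf x : V))) := (hv'fm.sub hw'fm).prodMk (hvfm.sub hwfm)
      exact continuous_dualPair.comp_stronglyMeasurable hprod
    have hh₀int : Integrable h₀ μ :=
      hpair_int' (fun x => vf x - wf x) (fun x => v'f x - w'f x) (hvP.sub hwP) (hv'Q.sub hw'Q)
    -- conditions and values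
    set cnd : ℕ → ℕ → Set S := fun k j =>
      if j < k then Sp j ∩ MeasureTheory.spanningSets μ k else ∅ with hcnddef
    have hcndmeas : ∀ k j, MeasurableSet (cnd k j) := by
      intro k j
      rw [hcnddef]
      dsimp only
      split_ifs
      · exact (hSpmeas j).inter (MeasureTheory.measurableSet_spanningSets μ k)
      · exact MeasurableSet.empty
    have hcndSp : ∀ k j, cnd k j ⊆ Sp j := by
      intro k j x hx
      rw [hcnddef] at hx
      dsimp only at hx
      split_ifs at hx
      · exact hx.1
      · exact absurd hx (Set.notMem_empty x)
    have hcndfin : ∀ k j, μ (cnd k j) < ⊤ := by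
      intro k j
      rw [hcnddef]
      dsimp only
      split_ifs
      · exact lt_of_le_of_lt (measure_mono Set.inter_subset_right)
          (MeasureTheory.measure_spanningSets_lt_top μ k)
      · simp
    have hcndmono : ∀ k j, cnd k j ⊆ cnd (k+1) j := by
      intro k j x hx
      rw [hcnddef] at hx ⊢
      dsimp only at hx ⊢
      split_ifs at hx with h1
      · rw [if_pos (by omega)]
        exact ⟨hx.1, MeasureTheory.monotone_spanningSets μ (Nat.le_succ k) hx.2⟩
      · exact absurd hx (Set.notMem_empty x)
    set val : ℕ → ℕ → S → ℝ := fun k j => (cnd k j).piecewise (g j) h₀ with hvaldef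
    have hvalm : ∀ k j, StronglyMeasurable (val k j) := by
      intro k j
      exact (hgm j).piecewise (hcndmeas k j) hh₀m
    -- integrability of norms on finite-measure sets
    have hnormint : ∀ (f : S → V) (E : Set S), MemLp f P μ → MeasurableSet E → μ E < ⊤ →
        IntegrableOn (fun x => ‖f x‖) E μ := by
      intro f E hf hE hEfin
      haveI : IsFiniteMeasure (μ.restrict E) :=
        ⟨by rwa [Measure.restrict_apply_univ]⟩
      exact ((hf.restrict E).integrable hP1).norm
    have hnormint' : ∀ (f : S → StrongDual ℝ V) (E : Set S), MemLp f Q μ → MeasurableSet E →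
        μ E < ⊤ → IntegrableOn (fun x => ‖f x‖) E μ := by
      intro f E hf hE hEfin
      haveI : IsFiniteMeasure (μ.restrict E) :=
        ⟨by rwa [Measure.restrict_apply_univ]⟩
      exact ((hf.restrict E).integrable hQ1).norm
    -- integrability of g j on cnd k j
    have hgint : ∀ k j, IntegrableOn (g j) (cnd k j) μ := by
      intro k j
      set B : S → ℝ := fun x => ‖v'f x‖ * ‖vf x‖ + Cb j * ‖vf x‖ + Cb j * ‖v'f x‖
        + Cb j * Cb j with hBdef
      have hBint : IntegrableOn B (cnd k j) μ := by
        refine (((((hpair_int vf v'f hvP hv'Q).restrict)).add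
          ((hnormint vf _ hvP (hcndmeas k j) (hcndfin k j)).const_mul (Cb j))).add
          ((hnormint' v'f _ hv'Q (hcndmeas k j) (hcndfin k j)).const_mul (Cb j))).add
          (integrableOn_const (hcndfin k j).ne)
      refine Integrable.mono' hBint ((hgm j).aestronglyMeasurable.restrict) ?_
      rw [ae_restrict_iff' (hcndmeas k j)]
      refine Eventually.of_forall (fun x hx => ?_)
      have hxSp := hcndSp k j hx
      obtain ⟨hb1, hb2⟩ := hσbound j x hxSp
      rw [hgdef]
      dsimp only
      rw [Real.norm_eq_abs]
      have h1 : |(v'f x - (σ j x).2) (vf x - (σ j x).1)|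
          ≤ ‖v'f x - (σ j x).2‖ * ‖vf x - (σ j x).1‖ := (v'f x - (σ j x).2).le_opNorm _
      have h2 : ‖v'f x - (σ j x).2‖ ≤ ‖v'f x‖ + Cb j := by
        refine le_trans (norm_sub_le _ _) ?_
        linarith
      have h3 : ‖vf x - (σ j x).1‖ ≤ ‖vf x‖ + Cb j := by
        refine le_trans (norm_sub_le _ _) ?_
        linarith
      calc |(v'f x - (σ j x).2) (vf x - (σ j x).1)|
          ≤ ‖v'f x - (σ j x).2‖ * ‖vf x - (σ j x).1‖ := h1
      _ ≤ (‖v'f x‖ + Cb j) * (‖vf x‖ + Cb j) := by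
          refine mul_le_mul h2 h3 (norm_nonneg _) ?_
          positivity
      _ = B x := by rw [hBdef]; ring
    have hvalint : ∀ k j, Integrable (val k j) μ := by
      intro k j
      rw [hvaldef]
      dsimp only
      rw [← integrableOn_univ, ← Set.union_compl_self (cnd k j)]
      refine IntegrableOn.union ?_ ?_
      · refine (hgint k j).congr_fun ?_ (hcndmeas k j)
        intro x hx
        exact (Set.piecewise_eq_of_mem _ _ _ hx).symm
      · refine (hh₀int.integrableOn).congr_fun ?_ (hcndmeas k j).compl
        intro x hx
        exact (Set.piecewise_eq_of_notMem _ _ _ hx).symm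
    -- the infimum functions
    set ψ : ℕ → S → ℝ := fun k x => (Finset.range (k+1)).inf'
      (by simp : (Finset.range (k+1)).Nonempty) (fun j => val k j x) with hψdef
    have hψm : ∀ k, StronglyMeasurable (ψ k) := by
      intro k
      have hgen : ∀ (t : Finset ℕ) (ht : t.Nonempty),
          StronglyMeasurable (fun x => t.inf' ht (fun j => val k j x)) := by
        intro t ht
        induction ht using Finset.Nonempty.cons_induction with
        | singleton j => simpa using hvalm k j
        | cons j t hj ht ih =>
          have : (fun x => (Finset.cons j t hj).inf'
              (Finset.cons_nonempty hj) (fun j' => val k j' x))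
              = fun x => min (val k j x) (t.inf' ht (fun j' => val k j' x)) := by
            funext x
            rw [Finset.inf'_cons]
          rw [this]
          exact (hvalm k j).inf ih
      exact hgen _ _
    have hψint : ∀ k, Integrable (ψ k) μ := by
      intro k
      have hgen : ∀ (t : Finset ℕ) (ht : t.Nonempty),
          Integrable (fun x => t.inf' ht (fun j => val k j x)) μ := by
        intro t ht
        induction ht using Finset.Nonempty.cons_induction with
        | singleton j => simpa using hvalint k j
        | cons j t hj ht ih =>
          have : (fun x => (Finset.cons j t hj).inf'
              (Finset.cons_nonempty hj) (fun j' => val k j' x))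
              = fun x => min (val k j x) (t.inf' ht (fun j' => val k j' x)) := by
            funext x
            rw [Finset.inf'_cons]
          rw [this]
          exact (hvalint k j).inf ih
      exact hgen _ _
    -- antitonicity
    have hψanti : ∀ x, Antitone (fun k => ψ k x) := by
      intro x
      refine antitone_nat_of_succ_le (fun k => ?_)
      rw [hψdef]
      dsimp only
      refine Finset.le_inf' _ _ (fun j hj => ?_)
      by_cases hc : x ∈ cnd k j
      · have hc' : x ∈ cnd (k+1) j := hcndmono k j hc
        have hle : (Finset.range (k+2)).inf'
            (by simp) (fun j' => val (k+1) j' x) ≤ val (k+1) j x := by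
          refine Finset.inf'_le _ ?_
          simp only [Finset.mem_range] at hj ⊢
          omega
        rw [hvaldef] at hle ⊢
        dsimp only at hle ⊢
        rw [Set.piecewise_eq_of_mem _ _ _ hc' ] at hle
        rw [Set.piecewise_eq_of_mem _ _ _ hc]
        exact hle
      · have hempty : x ∉ cnd (k+1) (k+1) := by
          rw [hcnddef]
          simp
        have hle : (Finset.range (k+2)).inf'
            (by simp) (fun j' => val (k+1) j' x) ≤ val (k+1) (k+1) x := by
          refine Finset.inf'_le _ ?_
          simp
        rw [hvaldef] at hle ⊢
        dsimp only at hle ⊢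
        rw [Set.piecewise_eq_of_notMem _ _ _ hempty] at hle
        rw [Set.piecewise_eq_of_notMem _ _ _ hc]
        exact hle
    -- truncation
    set ψ' : ℕ → S → ℝ := fun k x => max (ψ k x) (-1) with hψ'def
    have hψ'm : ∀ k, StronglyMeasurable (ψ' k) := by
      intro k
      have h1 := (hψm k).sup (stronglyMeasurable_const (b := (-1:ℝ)))
      have h2 : ψ' k = fun x => (ψ k x) ⊔ (-1 : ℝ) := by
        funext x
        rw [hψ'def]
      rw [h2]
      exact h1
    have hψ'int : ∀ k, Integrable (ψ' k) μ := by
      intro k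
      refine Integrable.mono' ((hψint k).norm) (hψ'm k).aestronglyMeasurable ?_
      refine Eventually.of_forall (fun x => ?_)
      rw [hψ'def]
      dsimp only
      rw [Real.norm_eq_abs, Real.norm_eq_abs, abs_le]
      rcases le_or_gt (-1 : ℝ) (ψ k x) with h | h
      · rw [max_eq_left h]
        exact ⟨neg_abs_le _, le_abs_self _⟩
      · rw [max_eq_right h.le]
        constructor
        · have : ψ k x ≤ -1 := h.le
          have h2 : (1:ℝ) ≤ |ψ k x| := by
            rw [abs_of_nonpos (by linarith)]
            linarith
          linarith
        · have h2 : (0:ℝ) ≤ |ψ k x| := abs_nonneg _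
          linarith
    have hψ'anti : ∀ x, Antitone (fun k => ψ' k x) := by
      intro x k l hkl
      exact max_le_max (hψanti x hkl) le_rfl
    have hψ'lb : ∀ k x, -1 ≤ ψ' k x := fun k x => le_max_right _ _
    -- limit function
    set ρ : S → ℝ := fun x => ⨅ k, ψ' k x with hρdef
    have hbdd : ∀ x, BddBelow (Set.range (fun k => ψ' k x)) := by
      intro x
      exact ⟨-1, fun y ⟨k, hk⟩ => hk ▸ hψ'lb k x⟩
    have hρlim : ∀ x, Tendsto (fun k => ψ' k x) atTop (𝓝 (ρ x)) :=
      fun x => tendsto_atTop_ciInf (hψ'anti x) (hbdd x)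
    have hρm : StronglyMeasurable ρ :=
      stronglyMeasurable_of_tendsto atTop hψ'm (tendsto_pi_nhds.mpr hρlim)
    have hρb : ∀ x, -1 ≤ ρ x := fun x => le_ciInf (fun k => hψ'lb k x)
    have hρle : ∀ x k, ρ x ≤ ψ' k x := fun x k => ciInf_le (hbdd x) k
    -- KEY STEP : 0 ≤ ∫ ψ k for every k
    have hkey0 : ∀ k, 0 ≤ ∫ x, ψ k x ∂μ := by
      intro k
      have hex : ∀ x : S, ∃ j, j < k + 1 ∧ val k j x = ψ k x := by
        intro x
        obtain ⟨j, hj, hval⟩ := Finset.exists_mem_eq_inf'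
          (show (Finset.range (k+1)).Nonempty by simp) (fun j => val k j x)
        exact ⟨j, Finset.mem_range.mp hj, hval.symm⟩
      set τ : S → ℕ := fun x => Nat.find (hex x) with hτdef
      have hτspec : ∀ x, τ x < k + 1 ∧ val k (τ x) x = ψ k x := fun x => Nat.find_spec (hex x)
      have hτmeas : ∀ j, MeasurableSet {x | τ x = j} := by
        intro j
        have heq : {x | τ x = j} =
            ({x | j < k + 1 ∧ val k j x = ψ k x} ∩
              ⋂ (j' : ℕ) (_ : j' < j), {x | j' < k + 1 ∧ val k j' x = ψ k x}ᶜ) := by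
          ext x
          simp only [Set.mem_setOf_eq, Set.mem_inter_iff, Set.mem_iInter, Set.mem_compl_iff,
            hτdef, Nat.find_eq_iff]
        have hjm : ∀ j' : ℕ, MeasurableSet {x | j' < k + 1 ∧ val k j' x = ψ k x} := by
          intro j'
          by_cases hj' : j' < k + 1
          · have : {x | j' < k + 1 ∧ val k j' x = ψ k x} = {x | val k j' x = ψ k x} := by
              ext x; simp [hj']
            rw [this]
            exact measurableSet_eq_fun (hvalm k j').measurable (hψm k).measurable
          · have : {x | j' < k + 1 ∧ val k j' x = ψ k x} = ∅ := by
              ext x; simp [hj']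
            rw [this]
            exact MeasurableSet.empty
        rw [heq]
        exact (hjm j).inter
          (MeasurableSet.iInter fun j' => MeasurableSet.iInter fun _ => (hjm j').compl)
      set Tj : ℕ → Set S := fun j => {x | τ x = j} ∩ cnd k j with hTjdef
      have hTjmeas : ∀ j, MeasurableSet (Tj j) := fun j => (hτmeas j).inter (hcndmeas k j)
      have hTjfin : ∀ j, μ (Tj j) < ⊤ :=
        fun j => lt_of_le_of_lt (measure_mono Set.inter_subset_right) (hcndfin k j)
      -- the patched test function
      set sel : S → V × StrongDual ℝ V := fun x =>
        if x ∈ cnd k (τ x) then σ (τ x) x else (wf x, w'f x) with hseldef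
      set u₀ : S → V := fun x => (sel x).1 with hu₀def
      set u₀' : S → StrongDual ℝ V := fun x => (sel x).2 with hu₀'def
      -- sum representations
      have hu₀eq : u₀ = fun x => wf x + ∑ j ∈ Finset.range (k+1),
          Set.indicator (Tj j) (fun y => (σ j y).1 - wf y) x := by
        funext x
        rw [hu₀def, hseldef]
        dsimp only
        by_cases hc : x ∈ cnd k (τ x)
        · rw [if_pos hc]
          have hxT : x ∈ Tj (τ x) := ⟨rfl, hc⟩
          have hsum : ∑ j ∈ Finset.range (k+1),
              Set.indicator (Tj j) (fun y => (σ j y).1 - wf y) x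
              = (σ (τ x) x).1 - wf x := by
            rw [Finset.sum_eq_single_of_mem (τ x) (Finset.mem_range.mpr (hτspec x).1)]
            · exact Set.indicator_of_mem hxT _
            · intro j hj hne
              refine Set.indicator_of_notMem ?_ _
              intro hxj
              exact hne (hxj.1.symm)
          rw [hsum]
          abel
        · rw [if_neg hc]
          have hsum : ∑ j ∈ Finset.range (k+1),
              Set.indicator (Tj j) (fun y => (σ j y).1 - wf y) x = 0 := by
            refine Finset.sum_eq_zero (fun j hj => ?_)
            refine Set.indicator_of_notMem ?_ _
            intro hxj
            obtain ⟨hτx, hcndx⟩ := hxj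
            rw [Set.mem_setOf_eq] at hτx
            rw [← hτx] at hcndx
            exact hc hcndx
          rw [hsum, add_zero]
      have hu₀'eq : u₀' = fun x => w'f x + ∑ j ∈ Finset.range (k+1),
          Set.indicator (Tj j) (fun y => (σ j y).2 - w'f y) x := by
        funext x
        rw [hu₀'def, hseldef]
        dsimp only
        by_cases hc : x ∈ cnd k (τ x)
        · rw [if_pos hc]
          have hxT : x ∈ Tj (τ x) := ⟨rfl, hc⟩
          have hsum : ∑ j ∈ Finset.range (k+1),
              Set.indicator (Tj j) (fun y => (σ j y).2 - w'f y) x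
              = (σ (τ x) x).2 - w'f x := by
            rw [Finset.sum_eq_single_of_mem (τ x) (Finset.mem_range.mpr (hτspec x).1)]
            · exact Set.indicator_of_mem hxT _
            · intro j hj hne
              refine Set.indicator_of_notMem ?_ _
              intro hxj
              exact hne (hxj.1.symm)
          rw [hsum]
          abel
        · rw [if_neg hc]
          have hsum : ∑ j ∈ Finset.range (k+1),
              Set.indicator (Tj j) (fun y => (σ j y).2 - w'f y) x = 0 := by
            refine Finset.sum_eq_zero (fun j hj => ?_)
            refine Set.indicator_of_notMem ?_ _
            intro hxj
            obtain ⟨hτx, hcndx⟩ := hxj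
            rw [Set.mem_setOf_eq] at hτx
            rw [← hτx] at hcndx
            exact hc hcndx
          rw [hsum, add_zero]
      -- MemLp of the patches
      have hu₀P : MemLp u₀ P μ := by
        rw [hu₀eq]
        refine MemLp.add hwP ?_
        refine memLp_finset_sum _ (fun j hj => ?_)
        have hsplit : Set.indicator (Tj j) (fun y => (σ j y).1 - wf y)
            = fun x => Set.indicator (Tj j) (fun y => (σ j y).1) x
                - Set.indicator (Tj j) wf x := by
          funext x
          by_cases hx : x ∈ Tj j
          · rw [Set.indicator_of_mem hx, Set.indicator_of_mem hx, Set.indicator_of_mem hx]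
          · rw [Set.indicator_of_notMem hx, Set.indicator_of_notMem hx,
              Set.indicator_of_notMem hx, sub_zero]
        rw [hsplit]
        refine MemLp.sub ?_ (hwP.indicator (hTjmeas j))
        refine MemLp.of_le
          (memLp_indicator_const P (hTjmeas j) (Cb j) (Or.inr (hTjfin j).ne)) ?_ ?_
        · exact ((continuous_fst.comp_stronglyMeasurable
            (hσm j)).indicator (hTjmeas j)).aestronglyMeasurable
        · refine Eventually.of_forall (fun x => ?_)
          by_cases hx : x ∈ Tj j
          · rw [Set.indicator_of_mem hx, Set.indicator_of_mem hx]
            rw [Real.norm_eq_abs, abs_of_nonneg (hCbnn j)]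
            exact (hσbound j x (hcndSp k j hx.2)).1
          · rw [Set.indicator_of_notMem hx, Set.indicator_of_notMem hx]
            simp
      have hu₀'Q : MemLp u₀' Q μ := by
        rw [hu₀'eq]
        refine MemLp.add (ε := StrongDual ℝ V) hw'Q ?_
        refine memLp_finset_sum (ε' := StrongDual ℝ V) _ (fun j hj => ?_)
        have hsplit : Set.indicator (Tj j) (fun y => (σ j y).2 - w'f y)
            = fun x => Set.indicator (Tj j) (fun y => (σ j y).2) x
                - Set.indicator (Tj j) w'f x := by
          funext x
          by_cases hx : x ∈ Tj j
          · rw [Set.indicator_of_mem hx, Set.indicator_of_mem hx, Set.indicator_of_mem hx]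
          · rw [Set.indicator_of_notMem hx, Set.indicator_of_notMem hx,
              Set.indicator_of_notMem hx, sub_zero]
        rw [hsplit]
        refine MemLp.sub ?_ (hw'Q.indicator (hTjmeas j))
        refine MemLp.of_le
          (memLp_indicator_const Q (hTjmeas j) (Cb j) (Or.inr (hTjfin j).ne)) ?_ ?_
        · exact ((continuous_snd.comp_stronglyMeasurable
            (hσm j)).indicator (hTjmeas j)).aestronglyMeasurable
        · refine Eventually.of_forall (fun x => ?_)
          by_cases hx : x ∈ Tj j
          · rw [Set.indicator_of_mem hx, Set.indicator_of_mem hx]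
            rw [Real.norm_eq_abs, abs_of_nonneg (hCbnn j)]
            exact (hσbound j x (hcndSp k j hx.2)).2
          · rw [Set.indicator_of_notMem hx, Set.indicator_of_notMem hx]
            simp
      set uL : Lp V P μ := hu₀P.toLp u₀ with huLdef
      set u'L : Lp (StrongDual ℝ V) Q μ := hu₀'Q.toLp u₀' with hu'Ldef
      have humem : u'L ∈ canonExt A P Q μ uL := by
        simp only [canonExt, Set.mem_setOf_eq]
        filter_upwards [hw, hu₀P.coeFn_toLp, hu₀'Q.coeFn_toLp] with x h1 h2 h3
        rw [huLdef, hu'Ldef, h2, h3, hu₀def, hu₀'def, hseldef]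
        dsimp only
        by_cases hc : x ∈ cnd k (τ x)
        · rw [if_pos hc]
          exact (hσp (τ x) x (hcndSp k (τ x) hc)).1
        · rw [if_neg hc]
          exact h1
      have hHH := H uL u'L humem
      have hint_eq : LpPairing P Q μ (v - uL) (v' - u'L) = ∫ x, ψ k x ∂μ := by
        rw [LpPairing]
        refine integral_congr_ae ?_
        filter_upwards [Lp.coeFn_sub v uL, Lp.coeFn_sub v' u'L,
          hu₀P.coeFn_toLp, hu₀'Q.coeFn_toLp] with x h1 h2 h3 h4
        rw [h1, h2, Pi.sub_apply, Pi.sub_apply, huLdef, hu'Ldef, h3, h4]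
        have hval := (hτspec x).2
        rw [hvaldef] at hval
        dsimp only at hval
        rw [hu₀def, hu₀'def, hseldef]
        dsimp only
        by_cases hc : x ∈ cnd k (τ x)
        · rw [if_pos hc]
          rw [Set.piecewise_eq_of_mem _ _ _ hc] at hval
          rw [hgdef] at hval
          exact hval
        · rw [if_neg hc]
          rw [Set.piecewise_eq_of_notMem _ _ _ hc] at hval
          rw [hh₀def] at hval
          exact hval
      rw [hint_eq] at hHH
      exact hHH
    have hkey : ∀ k, 0 ≤ ∫ x, ψ' k x ∂μ := by
      intro k
      have hmono := integral_mono (hψint k) (hψ'int k)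
        (fun x => le_max_left (ψ k x) (-1:ℝ))
      linarith [hkey0 k]
    -- spanning sets reach every point
    have hspan : ∀ (x : S) (m : ℕ), ∃ k, x ∈ MeasureTheory.spanningSets μ k ∧ m ≤ k := by
      intro x m
      obtain ⟨k₀, hk₀⟩ : ∃ k₀, x ∈ MeasureTheory.spanningSets μ k₀ := by
        have h1 := MeasureTheory.iUnion_spanningSets μ
        have hx' : x ∈ ⋃ m', MeasureTheory.spanningSets μ m' := by rw [h1]; trivial
        exact Set.mem_iUnion.mp hx'
      exact ⟨max k₀ m, MeasureTheory.monotone_spanningSets μ (le_max_left _ _) hk₀,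
        le_max_right _ _⟩
    -- the central pointwise estimate
    have hmain : ∀ (x : S) (a : V) (a' : StrongDual ℝ V), a' ∈ A x a →
        ∀ δ : ℝ, 0 < δ → ρ x ≤ max ((v'f x - a') (vf x - a)) (-1) + δ := by
      intro x a a' ha δ hδ
      set t := (v'f x - a') (vf x - a) with htdef
      set C : ℝ := ‖vf x‖ + ‖v'f x‖ + ‖a‖ + ‖a'‖ + 2 with hCdef
      have hCpos : 0 < C := by rw [hCdef]; positivity
      obtain ⟨n, hn⟩ : ∃ n, 2 * ε n * C < δ := by
        have hη : (0:ℝ) < δ / (2 * C) := by positivity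
        obtain ⟨n, hn⟩ := (hεtend.eventually_lt_const hη).exists
        refine ⟨n, ?_⟩
        rw [lt_div_iff₀ (by positivity)] at hn
        nlinarith
      obtain ⟨i, hi⟩ := hd.exists_dist_lt (a, a') (hεpos n)
      set j := Nat.pair i n with hjdef
      have hunp : Nat.unpair j = (i, n) := Nat.unpair_pair i n
      have hxSp : x ∈ Sp j := by
        rw [hSpdef]
        simp only [Set.mem_setOf_eq, hunp]
        exact ⟨(a, a'), ha, Metric.mem_ball.mpr hi⟩
      have hσx : (σ j x).2 ∈ A x (σ j x).1 ∧ dist (σ j x) (d i) ≤ ε n := by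
        have := hσp j x hxSp
        rwa [hunp] at this
      have hdist2 : dist (σ j x) (a, a') ≤ 2 * ε n := by
        calc dist (σ j x) (a, a') ≤ dist (σ j x) (d i) + dist (d i) (a, a') :=
          dist_triangle _ _ _
        _ ≤ ε n + ε n := by
            rw [dist_comm (d i) (a, a')]
            linarith [hσx.2, hi.le]
        _ = 2 * ε n := by ring
      have hcomp1 : ‖a - (σ j x).1‖ ≤ 2 * ε n := by
        rw [Prod.dist_eq] at hdist2
        have := le_trans (le_max_left (dist (σ j x).1 a) (dist (σ j x).2 a')) hdist2
        rw [dist_comm] at this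
        rwa [← dist_eq_norm]
      have hcomp2 : ‖a' - (σ j x).2‖ ≤ 2 * ε n := by
        rw [Prod.dist_eq] at hdist2
        have := le_trans (le_max_right (dist (σ j x).1 a) (dist (σ j x).2 a')) hdist2
        rw [dist_comm] at this
        rwa [← dist_eq_norm]
      have hb' : ‖(σ j x).2‖ ≤ ‖a'‖ + 2 := by
        have h1 : ‖(σ j x).2‖ ≤ ‖a'‖ + ‖a' - (σ j x).2‖ := by
          calc ‖(σ j x).2‖ = ‖a' - (a' - (σ j x).2)‖ := by
                congr 1
                abel
          _ ≤ ‖a'‖ + ‖a' - (σ j x).2‖ := norm_sub_le _ _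
        have h2 : 2 * ε n ≤ 2 := by linarith [hεle1 n]
        linarith
      have hperturb := pair_perturb (vf x) a ((σ j x).1) (v'f x) a' ((σ j x).2)
      have hgle : g j x ≤ t + δ := by
        have hmax : max ‖a - (σ j x).1‖ ‖a' - (σ j x).2‖ ≤ 2 * ε n := max_le hcomp1 hcomp2
        have hC2 : ‖vf x‖ + ‖v'f x‖ + ‖a‖ + ‖(σ j x).2‖ ≤ C := by
          rw [hCdef]; linarith
        have hprod : max ‖a - (σ j x).1‖ ‖a' - (σ j x).2‖ *
            (‖vf x‖ + ‖v'f x‖ + ‖a‖ + ‖(σ j x).2‖) ≤ 2 * ε n * C := by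
          refine mul_le_mul hmax hC2 (by positivity) (by positivity)
        have habs : |g j x - t| < δ := by
          rw [hgdef]
          dsimp only
          calc |(v'f x - (σ j x).2) (vf x - (σ j x).1) - t| ≤ _ := hperturb
          _ ≤ 2 * ε n * C := hprod
          _ < δ := hn
        have := abs_lt.mp habs
        linarith [this.2]
      obtain ⟨k, hk1, hk2⟩ := hspan x (j+1)
      have hxcnd : x ∈ cnd k j := by
        rw [hcnddef]
        dsimp only
        rw [if_pos (by omega : j < k)]
        exact ⟨hxSp, hk1⟩
      have hψle : ψ k x ≤ g j x := by
        have h1 : ψ k x ≤ val k j x := by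
          rw [hψdef]
          dsimp only
          exact Finset.inf'_le _ (Finset.mem_range.mpr (by omega))
        rw [hvaldef] at h1
        dsimp only at h1
        rwa [Set.piecewise_eq_of_mem _ _ _ hxcnd] at h1
      calc ρ x ≤ ψ' k x := hρle x k
      _ ≤ max (g j x) (-1) := by
          rw [hψ'def]
          exact max_le_max hψle le_rfl
      _ ≤ max (t + δ) (-1) := max_le_max hgle le_rfl
      _ ≤ max t (-1) + δ := by
          refine max_le ?_ ?_
          · have := le_max_left t (-1:ℝ)
            linarith
          · have := le_max_right t (-1:ℝ)
            linarith
    -- sign information on ρ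
    have hboth : ∀ x, ρ x ≤ 0 ∧ ((v'f x ∉ A x (vf x)) → ρ x < 0) := by
      intro x
      by_cases hx : v'f x ∈ A x (vf x)
      · have h0 : ∀ δ : ℝ, 0 < δ → ρ x ≤ 0 + δ := by
          intro δ hδ
          have := hmain x (vf x) (v'f x) hx δ hδ
          have ht0 : (v'f x - v'f x) (vf x - vf x) = 0 := by simp
          rw [ht0] at this
          have hm0 : max (0:ℝ) (-1) = 0 := by norm_num
          rw [hm0] at this
          linarith
        have hρ0 : ρ x ≤ 0 := le_of_forall_pos_le_add h0
        exact ⟨hρ0, fun hc => absurd hx hc⟩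
      · obtain ⟨a, a', ha, hneg⟩ : ∃ (a : V) (a' : StrongDual ℝ V),
            a' ∈ A x a ∧ (v'f x - a') (vf x - a) < 0 := by
          by_contra hcon
          push_neg at hcon
          exact hx ((hAmax x).2 (vf x) (v'f x) (fun u u' hu => hcon u u' hu))
        have hmaxneg : max ((v'f x - a') (vf x - a)) (-1 : ℝ) < 0 :=
          max_lt hneg (by norm_num)
        have hρx := hmain x a a' ha (-(max ((v'f x - a') (vf x - a)) (-1 : ℝ)) / 2)
          (by linarith)
        have hρx2 : ρ x < 0 := by
          have := hρx
          set m := max ((v'f x - a') (vf x - a)) (-1 : ℝ)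
          linarith
        exact ⟨hρx2.le, fun _ => hρx2⟩
    -- conclude via the analytic lemma
    have hfin := ae_eq_zero_of_antitone_integral_nonneg hψ'int hψ'anti hρlim hρm hρb
      (Eventually.of_forall (fun x => (hboth x).1)) hkey
    filter_upwards [hfin] with x hx
    by_contra hc
    have hlt := (hboth x).2 hc
    rw [hx] at hlt
    exact lt_irrefl 0 hlt
end
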